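/- Let C be a class of groups closed under taking finite direct products, let A and C₀ be groups belonging to C and let B ≤ A be a subgroup. Then the special amalgam G = A ⋆_B C₀ is free-by-C: there exists a normal subgroup N ⊴ G such that N is a free group and G/N ∈ C. -/

import Mathlib

universe u

open Monoid

/-- A group `G` is *residually `C`*: every nontrivial element survives in a
surjective homomorphic image lying in the class `C`. -/
def ResiduallyC (C : ∀ (G : Type u) [Group G], Prop) (G : Type u) [Group G] : Prop :=
  ∀ g : G, g ≠ 1 → ∃ (Q : Type u) (_ : Group Q) (φ : G →* Q),
    C Q ∧ Function.Surjective φ ∧ φ g ≠ 1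
/-- The special amalgam `A ⋆_B C₀ = A ∗_B (B × C₀)`: the pushout of the
inclusion `B → A` and the homomorphism `B → B × C₀`, `b ↦ (b, 1)`, realised
as the quotient of the coproduct `A ∗ (B × C₀)` by the normal closure of the
elements identifying the two copies of `B`. -/
def SpecialAmalgam (A : Type u) [Group A] (B : Subgroup A) (C₀ : Type u) [Group C₀] :
    Type u :=
  (Monoid.Coprod A (B × C₀)) ⧸ Subgroup.normalClosure
    { x : Monoid.Coprod A (B × C₀) |
        ∃ b : B, x = Coprod.inl (b : A) * (Coprod.inr ((b, 1) : B × C₀))⁻¹ }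

instance (A : Type u) [Group A] (B : Subgroup A) (C₀ : Type u) [Group C₀] :
    Group (SpecialAmalgam A B C₀) :=
  QuotientGroup.Quotient.group _

/-- The canonical homomorphism `A → A ⋆_B C₀`. -/
def SpecialAmalgam.ofA (A : Type u) [Group A] (B : Subgroup A) (C₀ : Type u) [Group C₀] :
    A →* SpecialAmalgam A B C₀ :=
  (QuotientGroup.mk' _).comp Coprod.inl

/-- The canonical homomorphism `C₀ → A ⋆_B C₀`. -/
def SpecialAmalgam.ofC (A : Type u) [Group A] (B : Subgroup A) (C₀ : Type u) [Group C₀] :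
    C₀ →* SpecialAmalgam A B C₀ :=
  (QuotientGroup.mk' _).comp ((Coprod.inr).comp (MonoidHom.inr B C₀))

/-!
The fold map `A ⋆_B C₀ → A × C₀` is onto, so it suffices that its kernel is free. Let `A` act
on the free product `∗_{A/B} C₀` of copies of `C₀` by permuting the factors. Sending `a ↦ a` and
`c ↦ c` in the factor of the trivial coset embeds the amalgam in `(∗_{A/B} C₀) ⋊ A`, with inverse
on its image sending the factor of `aB` to the `a`-conjugate of `C₀` (well defined because `B`
commutes with `C₀`). This embedding carries the kernel of the fold map into the kernel of the
fold map `∗_{A/B} C₀ → C₀`. That kernel is free: for any index set `ι`, `∗_ι C₀` embeds in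
`F(ι × C₀) ⋊ C₀` for a twisted action of `C₀` on the free group, the fold map becoming the
projection onto `C₀`, so the kernel embeds in `F(ι × C₀)` and is free by Nielsen–Schreier.
-/

namespace MonoidHom

variable {G M : Type*} [Group G] [Monoid M]

def toMulAut (f : G →* Monoid.End M) : G →* MulAut M where
  toFun g := MonoidHom.toMulEquiv (f g) (f g⁻¹)
    (show f g⁻¹ * f g = 1 by rw [← map_mul, inv_mul_cancel, map_one])
    (show f g * f g⁻¹ = 1 by rw [← map_mul, mul_inv_cancel, map_one])
  map_one' := MulEquiv.ext fun x => show f 1 x = x by rw [map_one]; rfl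
  map_mul' g h := MulEquiv.ext fun x => show f (g * h) x = f g (f h x) by rw [map_mul]; rfl

@[simp] lemma toMulAut_apply (f : G →* Monoid.End M) (g : G) (x : M) :
    f.toMulAut g x = f g x :=
  rfl

end MonoidHom

-- `f.range` is free by the Nielsen–Schreier theorem.
lemma IsFreeGroup.of_injective {H K : Type u} [Group H] [Group K] [IsFreeGroup K] {f : H →* K}
    (hf : Function.Injective f) : IsFreeGroup H :=
  IsFreeGroup.ofMulEquiv (MonoidHom.ofInjective hf).symm

namespace SemidirectProduct

variable {N G H : Type*} [Group N] [Group G] [Group H] {φ : G →* MulAut N}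

def restrictLeft (θ : H →* N ⋊[φ] G) (L : Subgroup H) (hL : ∀ x ∈ L, (θ x).right = 1) :
    L →* N :=
  MonoidHom.mk' (fun x => (θ x).left) fun x y => by
    rw [Subgroup.coe_mul, map_mul, mul_left, hL x x.2, map_one, MulAut.one_apply]

lemma restrictLeft_injective {θ : H →* N ⋊[φ] G} (hθ : Function.Injective θ) (L : Subgroup H)
    (hL : ∀ x ∈ L, (θ x).right = 1) : Function.Injective (restrictLeft θ L hL) := by
  refine (injective_iff_map_eq_one _).2 fun x hx => Subtype.ext (hθ ?_)
  rw [OneMemClass.coe_one, map_one]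
  exact SemidirectProduct.ext hx (hL x x.2)

end SemidirectProduct

namespace Monoid.CoprodI

section Fold

variable {ι C₀ : Type*} [Group C₀]

def fold : CoprodI (fun _ : ι => C₀) →* C₀ :=
  lift fun _ => MonoidHom.id C₀

@[simp] lemma fold_of (i : ι) (c : C₀) : fold (of (M := fun _ : ι => C₀) (i := i) c) = c :=
  lift_of _ _

section

variable {A : Type*} [Monoid A] [MulAction A ι]

def permEnd : A →* Monoid.End (CoprodI fun _ : ι => C₀) where
  toFun a := lift fun i => of (M := fun _ : ι => C₀) (i := a • i)
  map_one' := show lift _ = .id _ from ext_hom _ _ fun i => by ext c; simp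
  map_mul' a b :=
    show lift _ = (lift _).comp (lift _) from ext_hom _ _ fun i => by ext c; simp [mul_smul]

@[simp] lemma permEnd_of (a : A) (i : ι) (c : C₀) :
    permEnd a (of (M := fun _ : ι => C₀) (i := i) c) = of (M := fun _ : ι => C₀) (i := a • i) c :=
  lift_of _ _

end

variable {A : Type*} [Group A] [MulAction A ι]

def foldProd : (CoprodI fun _ : ι => C₀) ⋊[permEnd.toMulAut] A →* A × C₀ :=
  SemidirectProduct.lift ((MonoidHom.inr A C₀).comp fold) (.inl A C₀) fun a =>
    ext_hom _ _ fun i => by ext c <;> simp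

lemma foldProd_apply (y : (CoprodI fun _ : ι => C₀) ⋊[permEnd.toMulAut] A) :
    foldProd y = (y.right, fold y.left) := by
  simp [foldProd, SemidirectProduct.lift]

end Fold

section Twist

variable {ι C₀ : Type*} [Group C₀]

/- Under `ofTwist i₀` the generator `(i, c)` goes to `c_i c_{i₀}⁻¹` and `twist d` becomes
conjugation by `d_{i₀}`. The generators `(i, 1)` go to `1`; keeping them makes `twist` an action
without case distinctions. -/
def twistEnd : C₀ →* Monoid.End (FreeGroup (ι × C₀)) where
  toFun d := FreeGroup.lift fun p => .of (p.1, 1) * (.of (p.1, d))⁻¹ * .of (p.1, d * p.2)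
  map_one' := show FreeGroup.lift _ = .id _ from FreeGroup.ext_hom _ _ fun p => by simp
  map_mul' d e := show _ = (FreeGroup.lift _).comp (FreeGroup.lift _) from
    FreeGroup.ext_hom _ _ fun p => by simp [mul_assoc]

def twist : C₀ →* MulAut (FreeGroup (ι × C₀)) :=
  twistEnd.toMulAut

@[simp] lemma twist_of (d : C₀) (i : ι) (c : C₀) :
    twist d (.of (i, c)) = .of (i, 1) * (.of (i, d))⁻¹ * .of (i, d * c) := by
  rw [twist, MonoidHom.toMulAut_apply]
  exact FreeGroup.lift_apply_of

def toTwist : CoprodI (fun _ : ι => C₀) →* FreeGroup (ι × C₀) ⋊[twist] C₀ :=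
  lift fun i =>
    { toFun c := ⟨(.of (i, 1))⁻¹ * .of (i, c), c⟩
      map_one' := by ext <;> simp
      map_mul' c d := by ext <;> simp [mul_assoc] }

lemma toTwist_right (x : CoprodI fun _ : ι => C₀) : (toTwist x).right = fold x :=
  DFunLike.congr_fun (show SemidirectProduct.rightHom.comp toTwist = fold from
    ext_hom _ _ fun i => by ext c; simp [toTwist]) x

def ofTwist (i₀ : ι) : FreeGroup (ι × C₀) ⋊[twist] C₀ →* CoprodI fun _ : ι => C₀ :=
  SemidirectProduct.lift
    (FreeGroup.lift fun p =>
      of (M := fun _ : ι => C₀) (i := p.1) p.2 * (of (M := fun _ : ι => C₀) (i := i₀) p.2)⁻¹)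
    (of (M := fun _ : ι => C₀) (i := i₀))
    fun d => FreeGroup.ext_hom _ _ fun ⟨i, c⟩ => by simp; group

lemma ofTwist_comp_toTwist (i₀ : ι) :
    (ofTwist i₀).comp toTwist = .id (CoprodI fun _ : ι => C₀) :=
  ext_hom _ _ fun i => by ext c; simp [toTwist, ofTwist, SemidirectProduct.mk_eq_inl_mul_inr]

lemma toTwist_injective : Function.Injective (toTwist (ι := ι) (C₀ := C₀)) := by
  cases isEmpty_or_nonempty ι with
  | inl _ =>
    have h (x : CoprodI fun _ : ι => C₀) : x = 1 := by
      induction x using CoprodI.induction_on with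
      | one => rfl
      | @of i _ => exact isEmptyElim i
      | mul x y hx hy => rw [hx, hy, one_mul]
    exact fun x y _ => (h x).trans (h y).symm
  | inr h =>
    obtain ⟨i₀⟩ := h
    exact Function.LeftInverse.injective (g := ofTwist i₀)
      (DFunLike.congr_fun (ofTwist_comp_toTwist i₀))

end Twist

instance isFreeGroup_ker_fold {ι C₀ : Type u} [Group C₀] :
    IsFreeGroup (fold : (CoprodI fun _ : ι => C₀) →* C₀).ker :=
  IsFreeGroup.of_injective (SemidirectProduct.restrictLeft_injective toTwist_injective _
    fun x hx => (toTwist_right x).trans hx)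

end Monoid.CoprodI

namespace SpecialAmalgam

open Monoid.CoprodI

variable {A : Type u} [Group A] {B : Subgroup A} {C₀ : Type u} [Group C₀]

def mk : Coprod A (B × C₀) →* SpecialAmalgam A B C₀ :=
  QuotientGroup.mk' _

lemma ofA_coe_eq_mk (b : B) : ofA A B C₀ b = mk (Coprod.inr (b, 1)) := by
  refine (QuotientGroup.eq (s := _)).2 ?_
  have hb := Subgroup.subset_normalClosure (s := { x : Coprod A (B × C₀) |
    ∃ b : B, x = Coprod.inl (b : A) * (Coprod.inr ((b, 1) : B × C₀))⁻¹ }) ⟨b, rfl⟩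
  simpa [mul_assoc] using
    Subgroup.normalClosure_normal.conj_mem _ (inv_mem hb) (Coprod.inl (b : A))⁻¹

lemma ofC_eq_mk (c : C₀) : ofC A B C₀ c = mk (Coprod.inr (1, c)) :=
  rfl

lemma commute_ofA_ofC (b : B) (c : C₀) : Commute (ofA A B C₀ b) (ofC A B C₀ c) := by
  rw [ofA_coe_eq_mk]
  exact ((Commute.one_right b).prod (Commute.one_left c)).map (mk.comp Coprod.inr)

lemma conj_ofA_ofC_eq_of_mk_eq {a₁ a₂ : A} (h : (a₁ : A ⧸ B) = a₂) (c : C₀) :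
    MulAut.conj (ofA A B C₀ a₁) (ofC A B C₀ c) = MulAut.conj (ofA A B C₀ a₂) (ofC A B C₀ c) := by
  have hb : a₁⁻¹ * a₂ ∈ B := QuotientGroup.eq.1 h
  rw [← mul_inv_cancel_left a₁ a₂, map_mul, map_mul, MulAut.mul_apply,
    MulAut.conj_apply (ofA A B C₀ (a₁⁻¹ * a₂)), (commute_ofA_ofC ⟨_, hb⟩ c).eq,
    mul_inv_cancel_right]

section Lift

variable {K : Type*} [Group K]

def lift (f : A →* K) (g : B × C₀ →* K) (h : ∀ b : B, f b = g (b, 1)) :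
    SpecialAmalgam A B C₀ →* K :=
  QuotientGroup.lift _ (Coprod.lift f g) <| Subgroup.normalClosure_le_normal <| by
    rintro _ ⟨b, rfl⟩
    simp [h b]

@[simp] lemma lift_ofA (f : A →* K) (g : B × C₀ →* K) (h : ∀ b : B, f b = g (b, 1)) (a : A) :
    lift f g h (ofA A B C₀ a) = f a :=
  Coprod.lift_apply_inl f g a

@[simp] lemma lift_ofC (f : A →* K) (g : B × C₀ →* K) (h : ∀ b : B, f b = g (b, 1)) (c : C₀) :
    lift f g h (ofC A B C₀ c) = g (1, c) :=
  Coprod.lift_apply_inr f g (1, c)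

lemma hom_ext {f g : SpecialAmalgam A B C₀ →* K} (hA : ∀ a, f (ofA A B C₀ a) = g (ofA A B C₀ a))
    (hC : ∀ c, f (ofC A B C₀ c) = g (ofC A B C₀ c)) : f = g := by
  refine QuotientGroup.monoidHom_ext _ (Coprod.hom_ext (MonoidHom.ext hA) (MonoidHom.ext ?_))
  rintro ⟨b, c⟩
  have hbc : mk (Coprod.inr (b, c)) = ofA A B C₀ b * ofC A B C₀ c := by
    rw [ofA_coe_eq_mk, ofC_eq_mk, ← map_mul, ← map_mul, Prod.mk_mul_mk, mul_one, one_mul]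
  show f (mk _) = g (mk _)
  rw [hbc, map_mul, map_mul, hA, hC]

end Lift

def toProd : SpecialAmalgam A B C₀ →* A × C₀ :=
  lift (.inl A C₀) (B.subtype.prodMap (.id C₀)) fun _ => rfl

@[simp] lemma toProd_ofA (a : A) : toProd (ofA A B C₀ a) = (a, 1) :=
  lift_ofA _ _ _ a

@[simp] lemma toProd_ofC (c : C₀) : toProd (ofC A B C₀ c) = (1, c) :=
  lift_ofC _ _ _ c

lemma toProd_surjective : Function.Surjective (toProd : SpecialAmalgam A B C₀ →* A × C₀) :=
  fun ⟨a, c⟩ => ⟨ofA A B C₀ a * ofC A B C₀ c, by simp⟩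

def toSemidirect :
    SpecialAmalgam A B C₀ →* (CoprodI fun _ : A ⧸ B => C₀) ⋊[permEnd.toMulAut] A :=
  lift SemidirectProduct.inr
    { toFun x := ⟨of (M := fun _ : A ⧸ B => C₀) (i := ((1 : A) : A ⧸ B)) x.2, x.1⟩
      map_one' := by ext <;> simp
      map_mul' x y := by
        have hx : (x.1 : A) • ((1 : A) : A ⧸ B) = (1 : A) := by
          rw [MulAction.Quotient.smul_mk, QuotientGroup.eq]
          simp
        ext <;> simp [hx] }
    fun b => by ext <;> simp

@[simp] lemma toSemidirect_ofA (a : A) :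
    toSemidirect (ofA A B C₀ a) = SemidirectProduct.inr a :=
  lift_ofA _ _ _ a

@[simp] lemma toSemidirect_ofC (c : C₀) :
    toSemidirect (ofC A B C₀ c) = SemidirectProduct.inl (of (i := ((1 : A) : A ⧸ B)) c) :=
  lift_ofC _ _ _ c

noncomputable def fromSemidirect :
    (CoprodI fun _ : A ⧸ B => C₀) ⋊[permEnd.toMulAut] A →* SpecialAmalgam A B C₀ :=
  SemidirectProduct.lift
    (Monoid.CoprodI.lift fun q => (MulAut.conj (ofA A B C₀ q.out)).toMonoidHom.comp (ofC A B C₀))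
    (ofA A B C₀) fun a => ext_hom _ _ fun q => MonoidHom.ext fun c => by
      have hq : ((a • q).out : A ⧸ B) = (a * q.out : A) := by
        rw [QuotientGroup.out_eq', ← smul_eq_mul, ← MulAction.Quotient.smul_mk,
          QuotientGroup.out_eq']
      simp only [MonoidHom.comp_apply, MulEquiv.coe_toMonoidHom, MonoidHom.toMulAut_apply,
        permEnd_of, lift_of, ← MulAut.mul_apply, ← map_mul]
      exact conj_ofA_ofC_eq_of_mk_eq hq c

lemma fromSemidirect_comp_toSemidirect :
    (fromSemidirect (B := B) (C₀ := C₀)).comp toSemidirect = .id (SpecialAmalgam A B C₀) :=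
  hom_ext (fun a => by simp [fromSemidirect]) fun c => by
    simpa [fromSemidirect] using
      conj_ofA_ofC_eq_of_mk_eq (QuotientGroup.out_eq' ((1 : A) : A ⧸ B)) c

lemma toSemidirect_injective : Function.Injective (toSemidirect (A := A) (B := B) (C₀ := C₀)) :=
  Function.LeftInverse.injective (g := fromSemidirect)
    (DFunLike.congr_fun fromSemidirect_comp_toSemidirect)

lemma foldProd_toSemidirect (x : SpecialAmalgam A B C₀) : foldProd (toSemidirect x) = toProd x :=
  DFunLike.congr_fun (f := foldProd.comp toSemidirect)
    (hom_ext (fun a => by simp [foldProd_apply]) fun c => by simp [foldProd_apply]) x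

lemma mem_ker_toProd_iff (x : SpecialAmalgam A B C₀) :
    x ∈ (toProd : SpecialAmalgam A B C₀ →* A × C₀).ker ↔
      (toSemidirect x).right = 1 ∧ (toSemidirect x).left ∈ fold.ker := by
  rw [MonoidHom.mem_ker, ← foldProd_toSemidirect, foldProd_apply, Prod.mk_eq_one,
    MonoidHom.mem_ker]

theorem isFreeGroup_ker_toProd : IsFreeGroup (toProd : SpecialAmalgam A B C₀ →* A × C₀).ker := by
  have hker (x) (hx : x ∈ _) := (mem_ker_toProd_iff (A := A) (B := B) (C₀ := C₀) x).1 hx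
  let f := (SemidirectProduct.restrictLeft toSemidirect _ fun x hx => (hker x hx).1).codRestrict
    fold.ker fun x => (hker x x.2).2
  exact IsFreeGroup.of_injective (f := f) fun x y hxy =>
    SemidirectProduct.restrictLeft_injective toSemidirect_injective _ _ (congrArg Subtype.val hxy)

end SpecialAmalgam

/-- If `C` is closed under isomorphism and finite direct products and
`A, C₀ ∈ C`, then the special amalgam `A ⋆_B C₀` is free-by-`C`. -/
theorem specialAmalgam_free_by_C (C : ∀ (G : Type u) [Group G], Prop)
    (hIso : ∀ (G H : Type u) [Group G] [Group H], G ≃* H → C G → C H)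
    (hProd : ∀ (G H : Type u) [Group G] [Group H], C G → C H → C (G × H))
    (A C₀ : Type u) [Group A] [Group C₀] (B : Subgroup A)
    (hA : C A) (hC : C C₀) :
    ∃ (N : Subgroup (SpecialAmalgam A B C₀)) (_ : N.Normal),
      IsFreeGroup N ∧ C (SpecialAmalgam A B C₀ ⧸ N) := by
  let φ : SpecialAmalgam A B C₀ →* A × C₀ := SpecialAmalgam.toProd
  refine ⟨φ.ker, inferInstance, SpecialAmalgam.isFreeGroup_ker_toProd, ?_⟩
  exact hIso (A × C₀) _
    (QuotientGroup.quotientKerEquivOfSurjective φ SpecialAmalgam.toProd_surjective).symm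
    (hProd A C₀ hA hC)
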